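/- Let Γ = (E, op, nx, P) be a connected oriented skeleton. For a region R with |R ∩ P| even, define the fundamental cycle z_R : E → ℤ² as follows: fix α_0 ∈ R, let n = |R|, and let β_0 = α_0, β_{2i+1} = op(β_{2i}), β_{2i+2} = nx^{−1}(β_{2i+1}) for 0 ≤ i < n (so β_{2n} = α_0); set h_0 = (1, 0) ∈ ℤ² and h_i = M_i·h_{i−1} for 1 ≤ i ≤ 2n, where M_i = −X if the i-th step is an nx^{−1}-step, M_i = −Y if the i-th step is an op-step with β_i ∈ P, and M_i = Y if it is an op-step with β_i ∉ P; finally let z_R(α) = Σ h_i, the sum over all i ∈ {1, …, 2n} with β_i = α. Then each such z_R lies in H_Γ and in the radical of the form q on H_Γ, and the collection of the z_R, taken over all regions R with |R ∩ P| even, is a ℤ-basis of the radical of (H_Γ, q). -/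

import Mathlib

/-!
For `h, g ∈ H_Γ` put `d_h(α) = h(α)₁ + h(nx α)₂`. Summing a local identity over the vertices
(using the vertex relations) and another over the edges (using the edge relations) gives
`B(h, g) = (1/3) ∑_α d_h(α) d_g(α)`. This form is positive semidefinite, so the radical consists
of the `h ∈ H_Γ` with `d_h = 0`, i.e. `h(α) = (-s(nx α), s(α))` for `s = h₂`. For such `h` the
vertex relations hold automatically (`1 + X + X² = 0`), and the edge relations say that
`f = s ∘ op` satisfies `f(ρ δ) = ε(ρ δ) f(δ)` for `ρ = nx⁻¹ ∘ op`, where `ε = -1` on `P` and `1`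
off `P`. Going once around a region `R` multiplies `f` by `∏_R ε = (-1)^|R ∩ P|`, so `f` vanishes
on the regions with `|R ∩ P|` odd and is determined by a single value on each of the others.
Along the boundary walk the vectors `h_i` alternate between `(±1, 0)` and `(0, ±1)`, and `z_R` is
exactly the solution whose `f` is supported on `R` and takes the value `±1` at the base point.
-/

/-- The matrix `X = [[-1, 1], [-1, 0]] ∈ SL(2, ℤ)` acting on column vectors `ℤ²`. -/
def Xact : ℤ × ℤ →+ ℤ × ℤ :=
  AddMonoidHom.mk' (fun v => (-v.1 + v.2, -v.1))
    (by
      intro a b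
      simp only [Prod.fst_add, Prod.snd_add, Prod.mk_add_mk, Prod.mk.injEq]
      constructor <;> ring)

/-- The matrix `Y = [[0, -1], [1, 0]] ∈ SL(2, ℤ)` acting on column vectors `ℤ²`. -/
def Yact : ℤ × ℤ →+ ℤ × ℤ :=
  AddMonoidHom.mk' (fun v => (-v.2, v.1))
    (by
      intro a b
      simp only [Prod.fst_add, Prod.snd_add, Prod.mk_add_mk, Prod.mk.injEq]
      constructor <;> (try trivial) <;> ring)

/-- The antisymmetric pairing `⟨u, v⟩ = u₁v₂ - u₂v₁` on `ℤ²`. -/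
def skist (u v : ℤ × ℤ) : ℤ := u.1 * v.2 - u.2 * v.1

variable {E : Type*}

/-- The vertex condition at `α`: `h(α) + X·h(nx α) + X²·h(nx² α)`. -/
def condV (nx : Equiv.Perm E) (α : E) : (E → ℤ × ℤ) →+ ℤ × ℤ :=
  AddMonoidHom.mk' (fun h => h α + Xact (h (nx α)) + Xact (Xact (h (nx (nx α)))))
    (by intro a b; simp only [Pi.add_apply, map_add]; abel)

/-- The edge condition at a head `α`: `h(α) + Y·h(op α)`. -/
def condE (op : Equiv.Perm E) (α : E) : (E → ℤ × ℤ) →+ ℤ × ℤ :=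
  AddMonoidHom.mk' (fun h => h α + Yact (h (op α)))
    (by intro a b; simp only [Pi.add_apply, map_add]; abel)

/-- The group `H_Γ` of an oriented skeleton `Γ = (E, op, nx, P)`: functions
`h : E → ℤ²` with `h(α) + X·h(nx α) + X²·h(nx² α) = 0` for all `α` and
`h(α) + Y·h(op α) = 0` for all heads `α ∈ P`. -/
def HGrp [DecidableEq E] (op nx : Equiv.Perm E) (P : Finset E) :
    AddSubgroup (E → ℤ × ℤ) :=
  (⨅ α : E, (condV nx α).ker) ⊓ (⨅ α ∈ P, (condE op α).ker)

/-- The symmetric bilinear form associated with the quadratic form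
`q(h) = -(1/3) ∑_α ⟨h(α), X·h(nx α)⟩`; one has `Bq nx h h = q h`. -/
def Bq [Fintype E] (nx : Equiv.Perm E) (h g : E → ℤ × ℤ) : ℚ :=
  -(1 / 6 : ℚ) *
    ∑ α : E, ((skist (h α) (Xact (g (nx α))) : ℚ) + (skist (g α) (Xact (h (nx α))) : ℚ))

/-- The region (orbit of `nx⁻¹ ∘ op`) containing `α`. -/
def regionOf [Fintype E] [DecidableEq E] (ρ : Equiv.Perm E) (α : E) : Finset E :=
  Finset.univ.filter fun b => ρ.SameCycle α b

/-- The sequence `β` of the boundary walk of the region containing `α₀`: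
`β₀ = α₀`, `β_{2i+1} = op β_{2i}`, `β_{2i+2} = nx⁻¹ β_{2i+1}`. -/
def beta (op nx : Equiv.Perm E) (α₀ : E) : ℕ → E
  | 0 => α₀
  | j + 1 => if Even j then op (beta op nx α₀ j) else nx⁻¹ (beta op nx α₀ j)

/-- The vectors carried along the boundary walk: `h₀ = (1, 0)`, `h_i = M_i h_{i-1}`
where `M_i = -X` for an `nx⁻¹`-step and `M_i = ∓Y` for an `op`-step according to
whether `β_i ∈ P` or not. -/
def hstep [DecidableEq E] (op nx : Equiv.Perm E) (P : Finset E) (α₀ : E) : ℕ → ℤ × ℤ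
  | 0 => (1, 0)
  | j + 1 =>
    if Even j then
      (if beta op nx α₀ (j + 1) ∈ P then -(Yact (hstep op nx P α₀ j))
        else Yact (hstep op nx P α₀ j))
    else -(Xact (hstep op nx P α₀ j))

/-- The fundamental cycle `z_R` of the region `R` containing `α₀`:
`z_R(α) = ∑ h_i`, the sum over all `i ∈ {1, …, 2n}` with `β_i = α`,
where `n = |R|`. -/
def zfun [Fintype E] [DecidableEq E] (op nx : Equiv.Perm E) (P : Finset E) (α₀ : E) :
    E → ℤ × ℤ :=
  fun α => ∑ i ∈ Finset.Icc 1 (2 * (regionOf (nx⁻¹ * op) α₀).card),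
    if beta op nx α₀ i = α then hstep op nx P α₀ i else 0

section Sums

open Finset

lemma eq_prod_range_mul_of_succ {M : Type*} [CommMonoid M] {u c : ℕ → M}
    (h : ∀ k, u (k + 1) = c k * u k) (n : ℕ) : u n = (∏ k ∈ range n, c k) * u 0 := by
  induction n with
  | zero => simp
  | succ n ih => rw [h, ih, prod_range_succ, ← mul_assoc, mul_comm (c n)]

lemma sum_Icc_one_two_mul {M : Type*} [AddCommMonoid M] (f : ℕ → M) (m : ℕ) :
    ∑ i ∈ Icc 1 (2 * m), f i = ∑ k ∈ range m, (f (2 * k + 1) + f (2 * k + 2)) := by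
  induction m with
  | zero => simp
  | succ m ih =>
    rw [sum_range_succ, ← ih, mul_add_one, ← add_assoc,
      sum_Icc_succ_top (by omega), sum_Icc_succ_top (by omega), add_assoc]

end Sums

section Region

open Finset MulAction

variable (ρ : Equiv.Perm E) (a : E)

lemma pow_period_apply : (ρ ^ period ρ a) a = a :=
  pow_period_smul ρ a

lemma injOn_pow_apply_range : Set.InjOn (fun k => (ρ ^ k) a) (range (period ρ a)) := by
  intro i hi j hj hij
  rw [coe_range, period_eq_minimalPeriod] at hi hj
  exact Function.iterate_injOn_Iio_minimalPeriod hi hj hij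

variable [Fintype E]

lemma period_perm_pos : 0 < period ρ a :=
  period_pos_of_orderOf_pos (orderOf_pos ρ) a

lemma sameCycle_iff_exists_lt_period {b : E} :
    ρ.SameCycle a b ↔ ∃ k < period ρ a, (ρ ^ k) a = b := by
  refine ⟨fun ⟨i, hi⟩ => ?_, fun ⟨k, _, hk⟩ => ⟨k, by rwa [zpow_natCast]⟩⟩
  have hpos : (0 : ℤ) < period ρ a := by exact_mod_cast period_perm_pos ρ a
  have hlt := Int.emod_lt_of_pos i hpos
  have hnn := Int.emod_nonneg i hpos.ne'
  refine ⟨(i % (period ρ a : ℤ)).toNat, by omega, ?_⟩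
  rw [← zpow_natCast, Int.toNat_of_nonneg hnn, ← hi]
  exact zpow_mod_period_smul i (g := ρ) (a := a)

variable [DecidableEq E]

lemma regionOf_eq_image : regionOf ρ a = (range (period ρ a)).image fun k => (ρ ^ k) a := by
  ext b
  simp [regionOf, sameCycle_iff_exists_lt_period]

lemma card_regionOf : (regionOf ρ a).card = period ρ a := by
  rw [regionOf_eq_image, card_image_of_injOn (injOn_pow_apply_range ρ a), card_range]

lemma regionOf_eq_of_sameCycle {a b : E} (h : ρ.SameCycle a b) :
    regionOf ρ a = regionOf ρ b := by
  ext c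
  simp only [regionOf, mem_filter, mem_univ, true_and]
  exact ⟨h.symm.trans, h.trans⟩

lemma prod_regionOf_eq_prod_range_succ {M : Type*} [CommMonoid M] (w : E → M) :
    ∏ γ ∈ regionOf ρ a, w γ = ∏ k ∈ range (period ρ a), w ((ρ ^ (k + 1)) a) := by
  have hsc : ρ.SameCycle a (ρ a) := ⟨1, by simp⟩
  have hper : period ρ (ρ a) = period ρ a := by
    rw [← card_regionOf, ← card_regionOf, regionOf_eq_of_sameCycle ρ hsc]
  rw [regionOf_eq_of_sameCycle ρ hsc, regionOf_eq_image, prod_image (injOn_pow_apply_range ρ _),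
    hper]
  simp only [pow_succ, Equiv.Perm.mul_apply]

end Region

section Twisted

open Finset MulAction

variable {R : Type*} [CommRing R]

def IsTwistedInvariant (ρ : Equiv.Perm E) (w f : E → R) : Prop :=
  ∀ δ, f (ρ δ) = w (ρ δ) * f δ

variable {ρ : Equiv.Perm E} {w f : E → R} {a : E} {τ : ℕ → R}

lemma IsTwistedInvariant.apply_pow (hf : IsTwistedInvariant ρ w f) (k : ℕ) :
    f ((ρ ^ k) a) = (∏ j ∈ range k, w ((ρ ^ (j + 1)) a)) * f a :=
  eq_prod_range_mul_of_succ (u := fun k => f ((ρ ^ k) a))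
    (fun k => by simp only [pow_succ', Equiv.Perm.mul_apply]; exact hf _) k

lemma IsTwistedInvariant.apply_pow_eq_mul (hf : IsTwistedInvariant ρ w f)
    (hτ : ∀ k, τ (k + 1) = w ((ρ ^ (k + 1)) a) * τ k) (hτ0 : τ 0 * τ 0 = 1) (k : ℕ) :
    f ((ρ ^ k) a) = f a * τ 0 * τ k := by
  rw [hf.apply_pow, eq_prod_range_mul_of_succ hτ k]
  linear_combination (-(∏ j ∈ range k, w ((ρ ^ (j + 1)) a)) * f a) * hτ0

variable [DecidableEq E]

noncomputable def orbitFun (ρ : Equiv.Perm E) (a : E) (τ : ℕ → R) (γ : E) : R :=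
  ∑ k ∈ range (period ρ a), if (ρ ^ k) a = γ then τ k else 0

lemma orbitFun_pow_apply {k : ℕ} (hk : k < period ρ a) : orbitFun ρ a τ ((ρ ^ k) a) = τ k := by
  rw [orbitFun, sum_eq_single_of_mem k (mem_range.2 hk) fun j hj hjk => if_neg fun h =>
    hjk (injOn_pow_apply_range ρ a hj (mem_range.2 hk) h), if_pos rfl]

lemma orbitFun_eq_zero {γ : E} (h : ¬ ρ.SameCycle a γ) : orbitFun ρ a τ γ = 0 :=
  sum_eq_zero fun k _ => if_neg fun he => h ⟨k, by rwa [zpow_natCast]⟩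

lemma orbitFun_isTwistedInvariant (hτ : ∀ k, τ (k + 1) = w ((ρ ^ (k + 1)) a) * τ k)
    (hclose : τ (period ρ a) = τ 0) : IsTwistedInvariant ρ w (orbitFun ρ a τ) := by
  intro δ
  set g : ℕ → R := fun k => if (ρ ^ k) a = ρ δ then τ k else 0
  have hshift : ∀ k, g (k + 1) = w (ρ δ) * if (ρ ^ k) a = δ then τ k else 0 := by
    intro k
    simp only [g, pow_succ', Equiv.Perm.mul_apply, ρ.injective.eq_iff]
    split_ifs with h
    · rw [hτ, pow_succ', Equiv.Perm.mul_apply, h]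
    · rw [mul_zero]
  have hg : g (period ρ a) = g 0 := by simp only [g, pow_period_apply, hclose, pow_zero]; rfl
  have hsum : ∑ k ∈ range (period ρ a), g (k + 1) = ∑ k ∈ range (period ρ a), g k := by
    have := (sum_range_succ' g (period ρ a)).symm.trans (sum_range_succ g (period ρ a))
    rwa [hg, add_left_inj] at this
  rw [orbitFun, orbitFun, mul_sum, ← hsum]
  exact sum_congr rfl fun k _ => hshift k

variable [Fintype E]

lemma orbitFun_self : orbitFun ρ a τ a = τ 0 := by
  simpa using orbitFun_pow_apply (τ := τ) (period_perm_pos ρ a)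

lemma IsTwistedInvariant.apply_eq_holonomy_mul (hf : IsTwistedInvariant ρ w f) :
    f a = (∏ γ ∈ regionOf ρ a, w γ) * f a := by
  rw [prod_regionOf_eq_prod_range_succ, ← hf.apply_pow, pow_period_apply]

lemma IsTwistedInvariant.apply_eq_sum_orbitFun (hf : IsTwistedInvariant ρ w f) {T : Finset E}
    {τ : E → ℕ → R} (hτ : ∀ β k, τ β (k + 1) = w ((ρ ^ (k + 1)) β) * τ β k)
    (hτ0 : ∀ β, τ β 0 * τ β 0 = 1) {γ : E} (hγ : ∃! β, β ∈ T ∧ ρ.SameCycle β γ) :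
    f γ = ∑ β ∈ T, (f β * τ β 0) * orbitFun ρ β (τ β) γ := by
  obtain ⟨β, ⟨hβT, hβγ⟩, huniq⟩ := hγ
  obtain ⟨k, hk, rfl⟩ := (sameCycle_iff_exists_lt_period ρ β).1 hβγ
  rw [sum_eq_single_of_mem β hβT fun β' hβ' hne => by
    rw [orbitFun_eq_zero fun h => hne (huniq β' ⟨hβ', h⟩), mul_zero],
    orbitFun_pow_apply hk, hf.apply_pow_eq_mul (hτ β) (hτ0 β)]

end Twisted

section Skeleton

open Finset

lemma Xact_apply (v : ℤ × ℤ) : Xact v = (-v.1 + v.2, -v.1) := rfl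

lemma Yact_apply (v : ℤ × ℤ) : Yact v = (-v.2, v.1) := rfl

lemma involutive_of_mul_self_eq_one {op : Equiv.Perm E} (hop2 : op * op = 1) :
    Function.Involutive op :=
  fun a => by simpa using DFunLike.congr_fun hop2 a

lemma apply_apply_apply_of_mul_mul_eq_one {nx : Equiv.Perm E} (hnx3 : nx * nx * nx = 1) (a : E) :
    nx (nx (nx a)) = a := by
  simpa using DFunLike.congr_fun hnx3 a

def pSign [DecidableEq E] (P : Finset E) (γ : E) : ℤ := if γ ∈ P then -1 else 1

lemma prod_pSign [DecidableEq E] (P s : Finset E) :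
    ∏ γ ∈ s, pSign P γ = (-1) ^ (s ∩ P).card := by
  rw [← prod_const, ← prod_ite_mem]
  rfl

def ofSnd (nx : Equiv.Perm E) : (E → ℤ) →+ (E → ℤ × ℤ) where
  toFun s α := (-s (nx α), s α)
  map_zero' := by ext <;> simp
  map_add' s t := by ext <;> simp [add_comm]

def defect (nx : Equiv.Perm E) (h : E → ℤ × ℤ) (α : E) : ℤ := (h α).1 + (h (nx α)).2

variable {op nx : Equiv.Perm E} {P : Finset E}

lemma defect_ofSnd (s : E → ℤ) (α : E) : defect nx (ofSnd nx s) α = 0 := by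
  simp [defect, ofSnd]

lemma eq_ofSnd_of_defect_eq_zero {h : E → ℤ × ℤ} (hd : ∀ α, defect nx h α = 0) :
    h = ofSnd nx fun α => (h α).2 := by
  funext α
  simp only [ofSnd, AddMonoidHom.coe_mk, ZeroHom.coe_mk]
  ext
  · have := hd α; simp only [defect] at this; omega
  · rfl

lemma mem_HGrp_iff [DecidableEq E] {h : E → ℤ × ℤ} :
    h ∈ HGrp op nx P ↔ (∀ α, condV nx α h = 0) ∧ ∀ α ∈ P, condE op α h = 0 := by
  simp [HGrp, AddSubgroup.mem_inf, AddSubgroup.mem_iInf, AddMonoidHom.mem_ker]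

lemma condV_ofSnd (hnx3 : nx * nx * nx = 1) (s : E → ℤ) (α : E) :
    condV nx α (ofSnd nx s) = 0 := by
  simp [condV, ofSnd, Xact_apply, apply_apply_apply_of_mul_mul_eq_one hnx3]

lemma condE_ofSnd_eq_zero_iff (s : E → ℤ) (α : E) :
    condE op α (ofSnd nx s) = 0 ↔ s (op α) = -s (nx α) ∧ s α = s (nx (op α)) := by
  simp only [condE, ofSnd, AddMonoidHom.mk'_apply, AddMonoidHom.coe_mk, ZeroHom.coe_mk,
    Yact_apply, Prod.mk_add_mk, Prod.ext_iff, Prod.fst_zero, Prod.snd_zero]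
  constructor <;> rintro ⟨h1, h2⟩ <;> constructor <;> linarith

lemma ofSnd_mem_HGrp_iff [DecidableEq E] (hop2 : op * op = 1) (hnx3 : nx * nx * nx = 1)
    (hP : ∀ α, α ∈ P ↔ op α ∉ P) (s : E → ℤ) :
    ofSnd nx s ∈ HGrp op nx P ↔ ∀ γ, s (op γ) = pSign P γ * s (nx γ) := by
  have hop := involutive_of_mul_self_eq_one hop2
  simp only [mem_HGrp_iff, condV_ofSnd hnx3, implies_true, true_and, condE_ofSnd_eq_zero_iff]
  constructor
  · intro h γ
    by_cases hγ : γ ∈ P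
    · simp [pSign, hγ, (h γ hγ).1]
    · have := (h (op γ) ((hP (op γ)).2 (by rwa [hop]))).2
      rw [hop] at this
      simp [pSign, hγ, this]
  · intro h α hα
    have h2 := h (op α)
    rw [hop, pSign, if_neg ((hP α).1 hα), one_mul] at h2
    exact ⟨by simp [h α, pSign, hα], h2⟩

lemma isTwistedInvariant_comp_op_iff (hop2 : op * op = 1) (w s : E → ℤ) :
    IsTwistedInvariant (nx⁻¹ * op) w (fun δ => s (op δ)) ↔ ∀ γ, s (op γ) = w γ * s (nx γ) := by
  have hop := involutive_of_mul_self_eq_one hop2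
  constructor
  · intro h γ
    simpa [hop γ, hop (nx γ)] using h (op (nx γ))
  · intro h δ
    simpa using h (nx⁻¹ (op δ))

end Skeleton

section Form

open Finset

lemma vertex_identity {a₀ a₁ a₂ b₀ b₁ b₂ : ℤ × ℤ} (ha : a₀ + Xact a₁ + Xact (Xact a₂) = 0)
    (hb : b₀ + Xact b₁ + Xact (Xact b₂) = 0) :
    (skist a₀ (Xact b₁) + skist b₀ (Xact a₁) + 2 * ((a₀.1 + a₁.2) * (b₀.1 + b₁.2))) +
      (skist a₁ (Xact b₂) + skist b₁ (Xact a₂) + 2 * ((a₁.1 + a₂.2) * (b₁.1 + b₂.2))) +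
      (skist a₂ (Xact b₀) + skist b₂ (Xact a₀) + 2 * ((a₂.1 + a₀.2) * (b₂.1 + b₀.2))) =
      3 * ((a₀.1 * b₀.2 + a₀.2 * b₀.1) + (a₁.1 * b₁.2 + a₁.2 * b₁.1) +
        (a₂.1 * b₂.2 + a₂.2 * b₂.1)) := by
  obtain ⟨p, q⟩ := a₀
  obtain ⟨p', q'⟩ := b₀
  simp only [Xact_apply, Prod.mk_add_mk, Prod.ext_iff, Prod.fst_zero, Prod.snd_zero] at ha hb
  obtain ⟨rfl, rfl⟩ : p = a₁.1 - a₁.2 + a₂.2 ∧ q = a₁.1 - a₂.1 + a₂.2 := by omega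
  obtain ⟨rfl, rfl⟩ : p' = b₁.1 - b₁.2 + b₂.2 ∧ q' = b₁.1 - b₂.1 + b₂.2 := by omega
  simp only [skist, Xact_apply]
  ring

lemma edge_identity {u v u' v' : ℤ × ℤ} (h : u + Yact v = 0) (h' : u' + Yact v' = 0) :
    (u.1 * u'.2 + u.2 * u'.1) + (v.1 * v'.2 + v.2 * v'.1) = 0 := by
  obtain ⟨u₁, u₂⟩ := u
  obtain ⟨u₁', u₂'⟩ := u'
  simp only [Yact_apply, Prod.ext_iff, Prod.fst_add, Prod.snd_add, Prod.fst_zero,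
    Prod.snd_zero] at h h'
  obtain ⟨rfl, rfl⟩ : u₁ = v.2 ∧ u₂ = -v.1 := by omega
  obtain ⟨rfl, rfl⟩ : u₁' = v'.2 ∧ u₂' = -v'.1 := by omega
  ring

variable [Fintype E] [DecidableEq E] {op nx : Equiv.Perm E} {P : Finset E}

lemma sum_fst_mul_snd_add_snd_mul_fst_eq_zero (hop2 : op * op = 1)
    (hP : ∀ α, α ∈ P ↔ op α ∉ P) {h g : E → ℤ × ℤ} (hh : h ∈ HGrp op nx P)
    (hg : g ∈ HGrp op nx P) : ∑ α, ((h α).1 * (g α).2 + (h α).2 * (g α).1) = 0 := by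
  obtain ⟨-, hEh⟩ := mem_HGrp_iff.1 hh
  obtain ⟨-, hEg⟩ := mem_HGrp_iff.1 hg
  have hop := involutive_of_mul_self_eq_one hop2
  set C : E → ℤ := fun α => (h α).1 * (g α).2 + (h α).2 * (g α).1
  have hpair : ∀ α, C α + C (op α) = 0 := by
    intro α
    by_cases hα : α ∈ P
    · exact edge_identity (hEh α hα) (hEg α hα)
    · have hopα : op α ∈ P := (hP (op α)).2 (by rwa [hop])
      have := edge_identity (hEh (op α) hopα) (hEg (op α) hopα)
      rw [hop] at this
      simp only [C]
      linarith
  have := sum_eq_zero (s := univ) fun α _ => hpair α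
  rw [sum_add_distrib, Equiv.sum_comp op C] at this
  linarith

lemma sum_skist_eq_neg_two_mul_sum_defect (hop2 : op * op = 1) (hnx3 : nx * nx * nx = 1)
    (hP : ∀ α, α ∈ P ↔ op α ∉ P) {h g : E → ℤ × ℤ} (hh : h ∈ HGrp op nx P)
    (hg : g ∈ HGrp op nx P) :
    ∑ α, (skist (h α) (Xact (g (nx α))) + skist (g α) (Xact (h (nx α)))) =
      -2 * ∑ α, defect nx h α * defect nx g α := by
  obtain ⟨hVh, -⟩ := mem_HGrp_iff.1 hh
  obtain ⟨hVg, -⟩ := mem_HGrp_iff.1 hg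
  have h3 := apply_apply_apply_of_mul_mul_eq_one hnx3
  set T : E → ℤ := fun α => skist (h α) (Xact (g (nx α))) + skist (g α) (Xact (h (nx α))) +
    2 * (defect nx h α * defect nx g α)
  set C : E → ℤ := fun α => (h α).1 * (g α).2 + (h α).2 * (g α).1
  have sum_orbit3 : ∀ F : E → ℤ, ∑ α, (F α + F (nx α) + F (nx (nx α))) = 3 * ∑ α, F α := by
    intro F
    rw [sum_add_distrib, sum_add_distrib, Equiv.sum_comp nx F,
      Equiv.sum_comp nx (fun α => F (nx α)), Equiv.sum_comp nx F]
    ring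
  have hC : ∑ α, C α = 0 := sum_fst_mul_snd_add_snd_mul_fst_eq_zero hop2 hP hh hg
  have hT : ∀ α, T α + T (nx α) + T (nx (nx α)) =
      3 * (C α + C (nx α) + C (nx (nx α))) := by
    intro α
    have := vertex_identity (hVh α) (hVg α)
    simp only [T, C, defect, h3]
    linarith
  have hTsum : ∑ α, T α = 0 := by
    have := sum_orbit3 T
    rw [sum_congr rfl fun α _ => hT α, ← mul_sum, sum_orbit3 C, hC] at this
    linarith
  simp only [T, sum_add_distrib, ← mul_sum] at hTsum
  rw [sum_add_distrib]
  linarith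

lemma Bq_eq_sum_defect (hop2 : op * op = 1) (hnx3 : nx * nx * nx = 1)
    (hP : ∀ α, α ∈ P ↔ op α ∉ P) {h g : E → ℤ × ℤ} (hh : h ∈ HGrp op nx P)
    (hg : g ∈ HGrp op nx P) :
    Bq nx h g = ((∑ α, defect nx h α * defect nx g α : ℤ) : ℚ) / 3 := by
  have key := congrArg (Int.cast : ℤ → ℚ) (sum_skist_eq_neg_two_mul_sum_defect hop2 hnx3 hP hh hg)
  push_cast at key
  rw [Bq, key]
  push_cast
  ring

lemma defect_eq_zero_of_Bq_self_eq_zero (hop2 : op * op = 1) (hnx3 : nx * nx * nx = 1)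
    (hP : ∀ α, α ∈ P ↔ op α ∉ P) {h : E → ℤ × ℤ} (hh : h ∈ HGrp op nx P)
    (hq : Bq nx h h = 0) (α : E) : defect nx h α = 0 := by
  rw [Bq_eq_sum_defect hop2 hnx3 hP hh hh, div_eq_zero_iff, Int.cast_eq_zero] at hq
  have hsq := hq.resolve_right (by norm_num)
  exact mul_self_eq_zero.1
    ((sum_eq_zero_iff_of_nonneg fun i _ => mul_self_nonneg _).1 hsq α (mem_univ α))

end Form

section Walk

open Finset MulAction

variable {op nx : Equiv.Perm E} {α₀ : E}

lemma beta_two_mul_add_one (k : ℕ) : beta op nx α₀ (2 * k + 1) = op (beta op nx α₀ (2 * k)) := by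
  rw [beta, if_pos (even_two_mul k)]

lemma beta_two_mul_add_two (k : ℕ) :
    beta op nx α₀ (2 * k + 2) = nx⁻¹ (beta op nx α₀ (2 * k + 1)) := by
  rw [beta, if_neg (Nat.not_even_two_mul_add_one k)]

lemma beta_two_mul (k : ℕ) : beta op nx α₀ (2 * k) = ((nx⁻¹ * op) ^ k) α₀ := by
  induction k with
  | zero => rfl
  | succ k ih =>
    rw [mul_add_one, beta_two_mul_add_two, beta_two_mul_add_one, ih, pow_succ',
      Equiv.Perm.mul_apply, Equiv.Perm.mul_apply]

variable [DecidableEq E] {P : Finset E}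

def walkSnd (op nx : Equiv.Perm E) (P : Finset E) (α₀ : E) (k : ℕ) : ℤ :=
  (hstep op nx P α₀ (2 * k + 1)).2

lemma hstep_two_mul_add_one_eq (k : ℕ) :
    hstep op nx P α₀ (2 * k + 1) = if beta op nx α₀ (2 * k + 1) ∈ P then
      -Yact (hstep op nx P α₀ (2 * k)) else Yact (hstep op nx P α₀ (2 * k)) := by
  rw [hstep, if_pos (even_two_mul k)]

lemma hstep_two_mul_add_two_eq (k : ℕ) :
    hstep op nx P α₀ (2 * k + 2) = -Xact (hstep op nx P α₀ (2 * k + 1)) := by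
  rw [hstep, if_neg (Nat.not_even_two_mul_add_one k)]

lemma hstep_two_mul_snd (k : ℕ) : (hstep op nx P α₀ (2 * k)).2 = 0 := by
  induction k with
  | zero => rfl
  | succ k ih =>
    rw [mul_add_one, hstep_two_mul_add_two_eq, hstep_two_mul_add_one_eq]
    split_ifs <;> simp [Xact_apply, Yact_apply, ih]

lemma hstep_two_mul_add_one (k : ℕ) :
    hstep op nx P α₀ (2 * k + 1) = (0, walkSnd op nx P α₀ k) := by
  refine Prod.ext ?_ rfl
  rw [hstep_two_mul_add_one_eq]
  split_ifs <;> simp [Yact_apply, hstep_two_mul_snd]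

lemma hstep_two_mul_add_two (k : ℕ) :
    hstep op nx P α₀ (2 * k + 2) = (-walkSnd op nx P α₀ k, 0) := by
  rw [hstep_two_mul_add_two_eq, hstep_two_mul_add_one]
  simp [Xact_apply]

lemma walkSnd_zero_mul_self : walkSnd op nx P α₀ 0 * walkSnd op nx P α₀ 0 = 1 := by
  rw [walkSnd, hstep_two_mul_add_one_eq]
  split_ifs <;> rfl

lemma walkSnd_succ (hP : ∀ α, α ∈ P ↔ op α ∉ P) (k : ℕ) :
    walkSnd op nx P α₀ (k + 1) =
      pSign P (((nx⁻¹ * op) ^ (k + 1)) α₀) * walkSnd op nx P α₀ k := by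
  rw [walkSnd, hstep_two_mul_add_one_eq, beta_two_mul_add_one, beta_two_mul, mul_add_one,
    hstep_two_mul_add_two]
  by_cases hx : ((nx⁻¹ * op) ^ (k + 1)) α₀ ∈ P
  · simp [pSign, hx, (hP _).1 hx, Yact_apply]
  · simp [pSign, hx, not_not.1 (mt (hP _).2 hx), Yact_apply]

variable [Fintype E]

lemma walkSnd_period (hP : ∀ α, α ∈ P ↔ op α ∉ P)
    (hev : Even ((regionOf (nx⁻¹ * op) α₀ ∩ P).card)) :
    walkSnd op nx P α₀ (period (nx⁻¹ * op) α₀) = walkSnd op nx P α₀ 0 := by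
  rw [eq_prod_range_mul_of_succ (walkSnd_succ hP), ← prod_regionOf_eq_prod_range_succ,
    prod_pSign, hev.neg_one_pow, one_mul]

lemma zfun_eq_ofSnd (hop2 : op * op = 1) :
    zfun op nx P α₀ = ofSnd nx fun α => orbitFun (nx⁻¹ * op) α₀ (walkSnd op nx P α₀) (op α) := by
  have hop := involutive_of_mul_self_eq_one hop2
  funext α
  rw [zfun, card_regionOf, sum_Icc_one_two_mul]
  simp only [hstep_two_mul_add_one, hstep_two_mul_add_two, beta_two_mul_add_two,
    beta_two_mul_add_one, beta_two_mul]
  ext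
  · simp only [Prod.fst_sum, Prod.fst_add, apply_ite Prod.fst, Prod.fst_zero, ite_self, zero_add,
      Equiv.Perm.inv_eq_iff_eq, ← hop.eq_iff, ofSnd, AddMonoidHom.coe_mk, ZeroHom.coe_mk, orbitFun,
      ← sum_neg_distrib, apply_ite Neg.neg, neg_zero]
  · simp only [Prod.snd_sum, Prod.snd_add, apply_ite Prod.snd, Prod.snd_zero, ite_self, add_zero,
      ← hop.eq_iff, ofSnd, AddMonoidHom.coe_mk, ZeroHom.coe_mk, orbitFun]

end Walk

section Radical

open Finset

variable [Fintype E] [DecidableEq E] {op nx : Equiv.Perm E} {P : Finset E}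

lemma zfun_mem_HGrp (hop2 : op * op = 1) (hnx3 : nx * nx * nx = 1) (hP : ∀ α, α ∈ P ↔ op α ∉ P)
    {α₀ : E} (hev : Even ((regionOf (nx⁻¹ * op) α₀ ∩ P).card)) :
    zfun op nx P α₀ ∈ HGrp op nx P := by
  have hop := involutive_of_mul_self_eq_one hop2
  rw [zfun_eq_ofSnd hop2, ofSnd_mem_HGrp_iff hop2 hnx3 hP]
  refine (isTwistedInvariant_comp_op_iff hop2 _
    (fun α => orbitFun (nx⁻¹ * op) α₀ (walkSnd op nx P α₀) (op α))).1 ?_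
  simpa only [hop _] using orbitFun_isTwistedInvariant (walkSnd_succ hP) (walkSnd_period hP hev)

lemma Bq_zfun_eq_zero (hop2 : op * op = 1) (hnx3 : nx * nx * nx = 1)
    (hP : ∀ α, α ∈ P ↔ op α ∉ P) {α₀ : E} (hev : Even ((regionOf (nx⁻¹ * op) α₀ ∩ P).card))
    {g : E → ℤ × ℤ} (hg : g ∈ HGrp op nx P) : Bq nx (zfun op nx P α₀) g = 0 := by
  rw [Bq_eq_sum_defect hop2 hnx3 hP (zfun_mem_HGrp hop2 hnx3 hP hev) hg, zfun_eq_ofSnd hop2]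
  simp [defect_ofSnd]

lemma eq_zero_of_sum_zsmul_zfun_eq_zero (hop2 : op * op = 1) {T : Finset E}
    (hT : ∀ β ∈ T, ∀ β' ∈ T, (nx⁻¹ * op).SameCycle β β' → β = β') {c : E → ℤ}
    (hc : ∑ β ∈ T, c β • zfun op nx P β = 0) {β : E} (hβ : β ∈ T) : c β = 0 := by
  have hop := involutive_of_mul_self_eq_one hop2
  have key := congrArg (fun h => (h (op β)).2) hc
  simp only [Finset.sum_apply, Prod.snd_sum, Pi.smul_apply, Prod.smul_snd, smul_eq_mul,
    zfun_eq_ofSnd hop2, ofSnd, AddMonoidHom.coe_mk, ZeroHom.coe_mk, hop β, Pi.zero_apply,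
    Prod.snd_zero] at key
  rw [sum_eq_single_of_mem β hβ fun β' hβ' hne => by
    rw [orbitFun_eq_zero fun h => hne (hT β' hβ' β hβ h), mul_zero], orbitFun_self] at key
  calc c β = c β * walkSnd op nx P β 0 * walkSnd op nx P β 0 := by
        rw [mul_assoc, walkSnd_zero_mul_self, mul_one]
    _ = 0 := by rw [key, zero_mul]

lemma eq_sum_zfun_of_defect_eq_zero (hop2 : op * op = 1) (hnx3 : nx * nx * nx = 1)
    (hP : ∀ α, α ∈ P ↔ op α ∉ P) {T : Finset E}
    (hTeven : ∀ β ∈ T, Even ((regionOf (nx⁻¹ * op) β ∩ P).card))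
    (hTunique : ∀ α, Even ((regionOf (nx⁻¹ * op) α ∩ P).card) →
      ∃! β, β ∈ T ∧ (nx⁻¹ * op).SameCycle β α)
    {h : E → ℤ × ℤ} (hh : h ∈ HGrp op nx P) (hd : ∀ α, defect nx h α = 0) :
    h = ∑ β ∈ T, ((h (op β)).2 * walkSnd op nx P β 0) • zfun op nx P β := by
  have hop := involutive_of_mul_self_eq_one hop2
  set f : E → ℤ := fun δ => (h (op δ)).2
  have hf : IsTwistedInvariant (nx⁻¹ * op) (pSign P) f := by
    refine (isTwistedInvariant_comp_op_iff hop2 _ fun α => (h α).2).2 ?_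
    refine (ofSnd_mem_HGrp_iff hop2 hnx3 hP fun α => (h α).2).1 ?_
    rwa [← eq_ofSnd_of_defect_eq_zero hd]
  have hfγ : ∀ γ, f γ = ∑ β ∈ T,
      (f β * walkSnd op nx P β 0) * orbitFun (nx⁻¹ * op) β (walkSnd op nx P β) γ := by
    intro γ
    by_cases hev : Even ((regionOf (nx⁻¹ * op) γ ∩ P).card)
    · exact hf.apply_eq_sum_orbitFun (fun _ => walkSnd_succ hP) (fun _ => walkSnd_zero_mul_self)
        (hTunique γ hev)
    · have hfγ0 := hf.apply_eq_holonomy_mul (a := γ)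
      rw [prod_pSign, (Nat.not_even_iff_odd.1 hev).neg_one_pow] at hfγ0
      rw [show f γ = 0 by omega, eq_comm]
      refine sum_eq_zero fun β hβ => ?_
      rw [orbitFun_eq_zero fun hsc =>
        hev (regionOf_eq_of_sameCycle (nx⁻¹ * op) hsc ▸ hTeven β hβ), mul_zero]
  conv_lhs => rw [eq_ofSnd_of_defect_eq_zero hd]
  simp only [zfun_eq_ofSnd hop2, ← map_zsmul, ← map_sum]
  congr 1
  funext α
  simpa [hop α, f, Finset.sum_apply] using hfγ (op α)

end Radical

theorem fundamental_cycles_basis_of_radical_general [Fintype E] [DecidableEq E]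
    (op nx : Equiv.Perm E) (P : Finset E)
    (hop2 : op * op = 1)
    (hnx3 : nx * nx * nx = 1)
    (hP : ∀ α, α ∈ P ↔ op α ∉ P) :
    (∀ α₀ : E, Even ((regionOf (nx⁻¹ * op) α₀ ∩ P).card) →
      zfun op nx P α₀ ∈ HGrp op nx P ∧
        ∀ g ∈ HGrp op nx P, Bq nx (zfun op nx P α₀) g = 0) ∧
    ∀ T : Finset E,
      ((∀ β ∈ T, Even ((regionOf (nx⁻¹ * op) β ∩ P).card)) ∧
        (∀ α : E, Even ((regionOf (nx⁻¹ * op) α ∩ P).card) →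
          ∃! β, β ∈ T ∧ (nx⁻¹ * op).SameCycle β α)) →
      (∀ c : E → ℤ, (∑ β ∈ T, c β • zfun op nx P β) = 0 → ∀ β ∈ T, c β = 0) ∧
      (∀ h ∈ HGrp op nx P, (∀ g ∈ HGrp op nx P, Bq nx h g = 0) →
        ∃ c : E → ℤ, h = ∑ β ∈ T, c β • zfun op nx P β) := by
  refine ⟨fun α₀ hev => ⟨zfun_mem_HGrp hop2 hnx3 hP hev,
    fun g hg => Bq_zfun_eq_zero hop2 hnx3 hP hev hg⟩, fun T ⟨hTeven, hTunique⟩ => ⟨?_, ?_⟩⟩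
  · refine fun c hc β hβ => eq_zero_of_sum_zsmul_zfun_eq_zero hop2 (fun b hb b' hb' hsc => ?_) hc hβ
    obtain ⟨_, _, huniq⟩ := hTunique b' (hTeven b' hb')
    exact (huniq b ⟨hb, hsc⟩).trans (huniq b' ⟨hb', .refl _ _⟩).symm
  · intro h hh hrad
    have hd := defect_eq_zero_of_Bq_self_eq_zero hop2 hnx3 hP hh (hrad h hh)
    exact ⟨_, eq_sum_zfun_of_defect_eq_zero hop2 hnx3 hP hTeven hTunique hh hd⟩

/-- each fundamental cycle `z_R` of a region `R` with `|R ∩ P|` even lies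
in `H_Γ` and in the radical of the form `q`, and, taken over a transversal of the
regions with `|R ∩ P|` even, the fundamental cycles form a ℤ-basis of the radical of
`(H_Γ, q)`. -/
theorem fundamental_cycles_basis_of_radical [Fintype E] [DecidableEq E] [Nonempty E]
    (op nx : Equiv.Perm E) (P : Finset E)
    (hop2 : op * op = 1) (hopf : ∀ α, op α ≠ α)
    (hnx3 : nx * nx * nx = 1) (hnxf : ∀ α, nx α ≠ α)
    (hconn : ∀ a b : E, ∃ w ∈ Subgroup.closure ({op, nx} : Set (Equiv.Perm E)), w a = b)
    (hP : ∀ α, α ∈ P ↔ op α ∉ P) :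
    (∀ α₀ : E, Even ((regionOf (nx⁻¹ * op) α₀ ∩ P).card) →
      zfun op nx P α₀ ∈ HGrp op nx P ∧
        ∀ g ∈ HGrp op nx P, Bq nx (zfun op nx P α₀) g = 0) ∧
    ∀ T : Finset E,
      ((∀ β ∈ T, Even ((regionOf (nx⁻¹ * op) β ∩ P).card)) ∧
        (∀ α : E, Even ((regionOf (nx⁻¹ * op) α ∩ P).card) →
          ∃! β, β ∈ T ∧ (nx⁻¹ * op).SameCycle β α)) →
      (∀ c : E → ℤ, (∑ β ∈ T, c β • zfun op nx P β) = 0 → ∀ β ∈ T, c β = 0) ∧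
      (∀ h ∈ HGrp op nx P, (∀ g ∈ HGrp op nx P, Bq nx h g = 0) →
        ∃ c : E → ℤ, h = ∑ β ∈ T, c β • zfun op nx P β) :=
  fundamental_cycles_basis_of_radical_general op nx P hop2 hnx3 hP
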